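/- There exist a topologically regular compact set K ⊆ ℝ² and a continuous function F : K → ℝ such that F is differentiable at every point of int(K) with derivative 0 (so F ∈ C¹_int(K), its interior derivative extending continuously by 0 to K), yet F admits no continuous derivative on K, i.e., F ∉ C¹(K). In particular, the inclusion C¹(K) ⊆ C¹_int(K) can be strict. -/

import Mathlib

open Set Filter Topology MeasureTheory
open scoped NNReal ENNReal

noncomputable section

/-- `df` is a (not necessarily unique) derivative of `f` on the set `K`:
at every `x ∈ K`, `(f y - f x - ⟪df x, y - x⟫)/‖y - x‖ → 0` as `y → x` within `K`. -/
def IsDerivOn {d : ℕ} (K : Set (EuclideanSpace ℝ (Fin d)))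
    (f : EuclideanSpace ℝ (Fin d) → ℝ)
    (df : EuclideanSpace ℝ (Fin d) → EuclideanSpace ℝ (Fin d)) : Prop :=
  ∀ x ∈ K, Filter.Tendsto
    (fun y => (f y - f x - (inner ℝ (df x) (y - x) : ℝ)) / ‖y - x‖)
    (𝓝[K \ {x}] x) (𝓝 0)

/-!
Take `C = {0} ∪ ⋃ₙ [4⁻ⁿ, 2·4⁻ⁿ] ⊆ ℝ`, `K = C × [0, 1]` and `F x = 4⁻ⁿ` when `x₀` lies in the
`n`-th block. `F` is locally constant off the origin and `0 ≤ F x ≤ x₀` makes it continuous at the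
origin. A derivative `dF` at the origin would make the slopes `F (t e₀) / t` converge to
`⟪dF 0, e₀⟫` as `t → 0⁺` through `C`, but they equal `1` at `t = 4⁻ⁿ` and `1/2` at `t = 2·4⁻ⁿ`.
-/

section Topology

lemma isClosed_insert_iUnion_of_subset_closedBall {X : Type*} [MetricSpace X] {x : X}
    {s : ℕ → Set X} {r : ℕ → ℝ} (hs : ∀ n, IsClosed (s n))
    (hsr : ∀ n, s n ⊆ Metric.closedBall x (r n)) (hr : Tendsto r atTop (𝓝 0)) :
    IsClosed (insert x (⋃ n, s n)) := by
  refine isClosed_of_closure_subset fun y hy => ?_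
  rcases eq_or_ne y x with rfl | hyx
  · exact mem_insert _ _
  set δ := dist y x / 2
  have hδ : 0 < δ := half_pos (dist_pos.2 hyx)
  obtain ⟨N, hN⟩ := eventually_atTop.1 (hr.eventually (gt_mem_nhds hδ))
  have hcover : insert x (⋃ n, s n) ⊆ (⋃ n ∈ Finset.range N, s n) ∪ Metric.closedBall x δ := by
    rintro z (rfl | hz)
    · exact Or.inr (Metric.mem_closedBall_self hδ.le)
    obtain ⟨n, hn⟩ := mem_iUnion.1 hz
    rcases lt_or_ge n N with hnN | hnN
    · exact Or.inl (mem_biUnion (Finset.mem_range.2 hnN) hn)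
    · exact Or.inr (Metric.closedBall_subset_closedBall (hN n hnN).le (hsr n hn))
  have hclosed : IsClosed ((⋃ n ∈ Finset.range N, s n) ∪ Metric.closedBall x δ) :=
    (isClosed_biUnion_finset fun n _ => hs n).union Metric.isClosed_closedBall
  rcases hclosed.closure_subset_iff.2 hcover hy with hy | hy
  · obtain ⟨n, -, hn⟩ := mem_iUnion₂.1 hy
    exact mem_insert_of_mem _ (mem_iUnion.2 ⟨n, hn⟩)
  · exact absurd (Metric.mem_closedBall.1 hy) (by simp only [δ]; linarith [dist_pos.2 hyx])

variable {X Y : Type*} [TopologicalSpace X] [TopologicalSpace Y]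

lemma prod_eq_closure_interior {s : Set X} {t : Set Y} (hs : s = closure (interior s))
    (ht : t = closure (interior t)) : s ×ˢ t = closure (interior (s ×ˢ t)) := by
  rw [interior_prod_eq, closure_prod_eq, ← hs, ← ht]

lemma Homeomorph.preimage_eq_closure_interior (e : X ≃ₜ Y) {s : Set Y}
    (hs : s = closure (interior s)) : e ⁻¹' s = closure (interior (e ⁻¹' s)) := by
  rw [← e.preimage_interior, ← e.preimage_closure, ← hs]

end Topology

lemma IsDerivOn.tendsto_slope {d : ℕ} {K : Set (EuclideanSpace ℝ (Fin d))}
    {f : EuclideanSpace ℝ (Fin d) → ℝ} {df : EuclideanSpace ℝ (Fin d) → EuclideanSpace ℝ (Fin d)}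
    (hf : IsDerivOn K f df) {x u : EuclideanSpace ℝ (Fin d)} (hx : x ∈ K) (hu : ‖u‖ = 1)
    {ι : Type*} {l : Filter ι} {t : ι → ℝ} (ht : Tendsto t l (𝓝[>] 0))
    (htK : ∀ i, x + t i • u ∈ K) :
    Tendsto (fun i => (f (x + t i • u) - f x) / t i) l (𝓝 (inner ℝ (df x) u)) := by
  have hpos : ∀ᶠ i in l, 0 < t i := ht.eventually self_mem_nhdsWithin
  have hline : Tendsto (fun i => x + t i • u) l (𝓝[K \ {x}] x) := by
    refine tendsto_nhdsWithin_iff.2 ⟨?_, ?_⟩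
    · simpa using tendsto_const_nhds.add ((tendsto_nhdsWithin_iff.1 ht).1.smul_const u)
    · filter_upwards [hpos] with i hi
      have hu0 : u ≠ 0 := norm_ne_zero_iff.1 (by rw [hu]; exact one_ne_zero)
      exact ⟨htK i, by simpa [hu0] using hi.ne'⟩
  have hquot := ((hf x hx).comp hline).add_const (inner ℝ (df x) u)
  rw [zero_add] at hquot
  refine hquot.congr' ?_
  filter_upwards [hpos] with i hi
  simp only [Function.comp_apply, add_sub_cancel_left, norm_smul, hu, Real.norm_of_nonneg hi.le,
    mul_one, inner_smul_right]
  field_simp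
  ring

namespace Sauter

def a (n : ℕ) : ℝ := 4⁻¹ ^ n

lemma a_pos (n : ℕ) : 0 < a n := by unfold a; positivity

lemma a_succ (n : ℕ) : a (n + 1) = a n / 4 := by simp [a, pow_succ, div_eq_mul_inv]

lemma a_le_of_le {m n : ℕ} (h : m ≤ n) : a n ≤ a m :=
  pow_le_pow_of_le_one (by norm_num) (by norm_num) h

lemma tendsto_a : Tendsto a atTop (𝓝 0) :=
  tendsto_pow_atTop_nhds_zero_of_lt_one (by norm_num) (by norm_num)

def J (n : ℕ) : Set ℝ := Ioo (3 / 4 * a n) (3 * a n)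

lemma eq_of_mem_J {m n : ℕ} {t : ℝ} (hm : t ∈ J m) (hn : t ∈ J n) : m = n := by
  wlog hlt : m < n generalizing m n
  · rcases (not_lt.1 hlt).lt_or_eq with h | h
    · exact (this hn hm h).symm
    · exact h.symm
  have := a_le_of_le (Nat.succ_le_of_lt hlt)
  rw [a_succ] at this
  linarith [hm.1, hn.2]

lemma Icc_subset_J (n : ℕ) : Icc (a n) (2 * a n) ⊆ J n := by
  have := a_pos n
  exact Icc_subset_Ioo (by linarith) (by linarith)

def C : Set ℝ := insert 0 (⋃ n, Icc (a n) (2 * a n))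

open Classical in
def φ (t : ℝ) : ℝ := if h : ∃ n, t ∈ J n then a h.choose else 0

lemma φ_eq_of_mem_J {n : ℕ} {t : ℝ} (ht : t ∈ J n) : φ t = a n := by
  have h : ∃ m, t ∈ J m := ⟨n, ht⟩
  rw [φ, dif_pos h, eq_of_mem_J h.choose_spec ht]

lemma φ_zero : φ 0 = 0 := by
  refine dif_neg fun ⟨n, hn⟩ => ?_
  linarith [hn.1, a_pos n]

lemma φ_eventuallyEq {n : ℕ} {t : ℝ} (ht : t ∈ Icc (a n) (2 * a n)) : φ =ᶠ[𝓝 t] fun _ => a n :=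
  eventually_of_mem (isOpen_Ioo.mem_nhds (Icc_subset_J n ht)) fun _ => φ_eq_of_mem_J

lemma C_subset_Icc : C ⊆ Icc 0 2 := by
  rintro t (rfl | ht)
  · norm_num
  obtain ⟨n, hn⟩ := mem_iUnion.1 ht
  have := a_le_of_le (Nat.zero_le n)
  simp only [a, pow_zero] at this
  exact ⟨(a_pos n).le.trans hn.1, by simp only [a] at hn; linarith [hn.2]⟩

lemma isCompact_C : IsCompact C := by
  refine Metric.isCompact_of_isClosed_isBounded ?_ (Metric.isBounded_Icc 0 2 |>.subset C_subset_Icc)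
  refine isClosed_insert_iUnion_of_subset_closedBall (fun _ => isClosed_Icc) (fun n t ht => ?_)
    (by simpa using tendsto_a.const_mul 2)
  rw [Metric.mem_closedBall, Real.dist_0_eq_abs, abs_of_pos ((a_pos n).trans_le ht.1)]
  exact ht.2

lemma C_eq_closure_interior : C = closure (interior C) := by
  set U := ⋃ n, Ioo (a n) (2 * a n)
  have hU : U ⊆ interior C := (isOpen_iUnion fun _ => isOpen_Ioo).subset_interior_iff.2 <|
    (iUnion_mono fun _ => Ioo_subset_Icc_self).trans (subset_insert _ _)
  have hIcc (n : ℕ) : Icc (a n) (2 * a n) ⊆ closure U := by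
    rw [← closure_Ioo (by linarith [a_pos n])]
    exact closure_mono (subset_iUnion (fun n => Ioo (a n) (2 * a n)) n)
  refine (closure_minimal interior_subset isCompact_C.isClosed).antisymm' ?_
  refine (insert_subset ?_ (iUnion_subset hIcc)).trans (closure_mono hU)
  exact isClosed_closure.mem_of_tendsto tendsto_a
    (Eventually.of_forall fun n => hIcc n ⟨le_rfl, by linarith [a_pos n]⟩)

lemma abs_φ_le {t : ℝ} (ht : t ∈ C) : |φ t| ≤ |t| := by
  rcases ht with rfl | ht
  · simp [φ_zero]
  obtain ⟨n, hn⟩ := mem_iUnion.1 ht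
  rw [φ_eq_of_mem_J (Icc_subset_J n hn), abs_of_pos (a_pos n)]
  exact hn.1.trans (le_abs_self t)

lemma continuousOn_φ : ContinuousOn φ C := by
  rintro t (rfl | ht)
  · rw [ContinuousWithinAt, φ_zero]
    refine squeeze_zero_norm' (eventually_nhdsWithin_of_forall fun t ht => abs_φ_le ht) ?_
    exact (continuous_norm.tendsto' 0 0 norm_zero).mono_left nhdsWithin_le_nhds
  · obtain ⟨n, hn⟩ := mem_iUnion.1 ht
    exact (φ_eventuallyEq hn).continuousAt.continuousWithinAt

lemma hasDerivAt_φ {t : ℝ} (ht : t ∈ interior C) : HasDerivAt φ 0 t := by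
  have hpos : 0 < t := by
    have := interior_mono (C_subset_Icc.trans Icc_subset_Ici_self) ht
    rwa [interior_Ici] at this
  rcases interior_subset ht with rfl | ht
  · exact (lt_irrefl 0 hpos).elim
  obtain ⟨n, hn⟩ := mem_iUnion.1 ht
  exact (hasDerivAt_const t (a n)).congr_of_eventuallyEq (φ_eventuallyEq hn)

def toProd : EuclideanSpace ℝ (Fin 2) ≃ₜ ℝ × ℝ :=
  (EuclideanSpace.equiv (Fin 2) ℝ).toHomeomorph.trans Homeomorph.finTwoArrow

def K : Set (EuclideanSpace ℝ (Fin 2)) := toProd ⁻¹' (C ×ˢ Icc 0 1)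

def F (x : EuclideanSpace ℝ (Fin 2)) : ℝ := φ (x 0)

lemma isCompact_K : IsCompact K :=
  toProd.isCompact_preimage.2 (isCompact_C.prod isCompact_Icc)

lemma K_eq_closure_interior : K = closure (interior K) :=
  toProd.preimage_eq_closure_interior <| prod_eq_closure_interior C_eq_closure_interior <| by
    rw [interior_Icc, closure_Ioo zero_ne_one]

lemma continuousOn_F : ContinuousOn F K :=
  continuousOn_φ.comp (EuclideanSpace.proj 0).continuous.continuousOn fun _ hx => hx.1

lemma hasGradientAt_F {x : EuclideanSpace ℝ (Fin 2)} (hx : x ∈ interior K) :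
    HasGradientAt F 0 x := by
  rw [K, ← toProd.preimage_interior, interior_prod_eq] at hx
  rw [hasGradientAt_iff_hasFDerivAt, map_zero]
  have := (hasDerivAt_φ hx.1).comp_hasFDerivAt x
    (EuclideanSpace.proj (0 : Fin 2) : EuclideanSpace ℝ (Fin 2) →L[ℝ] ℝ).hasFDerivAt
  rwa [zero_smul] at this

lemma smul_single_mem_K {t : ℝ} (ht : t ∈ C) : t • EuclideanSpace.single 0 1 ∈ K := by
  simp [K, toProd, ht]

lemma inner_eq_inv_of_isDerivOn {dF : EuclideanSpace ℝ (Fin 2) → EuclideanSpace ℝ (Fin 2)}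
    (hF : IsDerivOn K F dF) {c : ℝ} (hc : 0 < c) (hcI : ∀ n, c * a n ∈ Icc (a n) (2 * a n)) :
    inner ℝ (dF 0) (EuclideanSpace.single 0 1) = c⁻¹ := by
  have ht : Tendsto (fun n => c * a n) atTop (𝓝[>] 0) :=
    tendsto_nhdsWithin_iff.2 ⟨by simpa using tendsto_a.const_mul c,
      Eventually.of_forall fun n => mul_pos hc (a_pos n)⟩
  have hslope := hF.tendsto_slope (x := 0) (u := EuclideanSpace.single 0 1)
    (by simpa using smul_single_mem_K (mem_insert 0 _)) (by simp) ht fun n => by simpa using smul_single_mem_K (mem_insert_of_mem _ (mem_iUnion.2 ⟨n, hcI n⟩))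
  refine tendsto_nhds_unique hslope (tendsto_const_nhds.congr fun n => ?_)
  simp only [F, zero_add, PiLp.smul_apply, PiLp.single_eq_same, smul_eq_mul, mul_one,
    φ_eq_of_mem_J (Icc_subset_J n (hcI n)), PiLp.zero_apply, φ_zero, sub_zero]
  field_simp [(a_pos n).ne']

lemma not_isDerivOn_F (dF : EuclideanSpace ℝ (Fin 2) → EuclideanSpace ℝ (Fin 2)) :
    ¬ IsDerivOn K F dF := fun hF => by
  have h1 := inner_eq_inv_of_isDerivOn hF one_pos fun n => ⟨by simp, by linarith [a_pos n]⟩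
  have h2 := inner_eq_inv_of_isDerivOn hF two_pos fun n => ⟨by linarith [a_pos n], le_rfl⟩
  norm_num [h1] at h2

end Sauter

/-- **Sauter's example.** There are a topologically regular compact set `K ⊆ ℝ²` and a
continuous `F : K → ℝ` differentiable with derivative `0` at every interior point
(so `F ∈ C¹_int(K)`, the interior derivative extending continuously by `0`), while `F`
admits no continuous derivative on `K`; hence `C¹(K) ⊊ C¹_int(K)` is possible. -/
theorem sauter_example :
    ∃ (K : Set (EuclideanSpace ℝ (Fin 2))) (F : EuclideanSpace ℝ (Fin 2) → ℝ),
      IsCompact K ∧ K = closure (interior K) ∧ ContinuousOn F K ∧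
      (∀ x ∈ interior K, HasGradientAt F (0 : EuclideanSpace ℝ (Fin 2)) x) ∧
      ¬ ∃ dF : EuclideanSpace ℝ (Fin 2) → EuclideanSpace ℝ (Fin 2),
          ContinuousOn dF K ∧ IsDerivOn K F dF :=
  ⟨Sauter.K, Sauter.F, Sauter.isCompact_K, Sauter.K_eq_closure_interior, Sauter.continuousOn_F,
    fun _ => Sauter.hasGradientAt_F, fun ⟨dF, _, hF⟩ => Sauter.not_isDerivOn_F dF hF⟩
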